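/- If the marginals of P and Q on coordinate j differ (P_{#j} ≠ Q_{#j}), then every coupling M of P and Q satisfies ∫ (x_j − y_j)² dM > 0; hence for w with w_j > 1 and all w_i ≥ 1, W_{c_w}(P,Q) > W_c(P,Q) whenever the infima are attained. -/

import Mathlib

/-!
If the `j`-th displacement `x j - y j` vanished `M`-almost everywhere for a coupling `M`, then
the `j`-th marginals of its two projections, i.e. of `P` and `Q`, would coincide. So every
coupling pays a positive amount for coordinate `j`. Since
`c_w = c + ∑ i, (w i ^ 2 - 1) (x i - y i) ^ 2` with nonnegative extra terms, on an optimal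
coupling for `c_w` the cost `c` is smaller by at least `(w j ^ 2 - 1) ∫ (x j - y j) ^ 2 > 0`,
and `W_c` is at most the `c`-cost of that coupling.
-/

open MeasureTheory

/-- Optimal transport cost: infimum over couplings of the expected cost. -/
noncomputable def transportCost {Z : Type*} [MeasurableSpace Z] (c : Z → Z → ℝ)
    (P Q : Measure Z) : ℝ :=
  sInf {r : ℝ | ∃ M : Measure (Z × Z), IsProbabilityMeasure M ∧
    M.map Prod.fst = P ∧ M.map Prod.snd = Q ∧ r = ∫ p, c p.1 p.2 ∂M}

namespace MeasureTheory.Measure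

variable {X Y : Type*} [MeasurableSpace X] [MeasurableSpace Y] {M : Measure (X × X)}

theorem map_fst_map_eq_map_snd_map_of_ae_eq {f : X → Y} (hf : Measurable f)
    (h : ∀ᵐ p ∂M, f p.1 = f p.2) : (M.map Prod.fst).map f = (M.map Prod.snd).map f := by
  rw [map_map hf measurable_fst, map_map hf measurable_snd]
  exact map_congr h

theorem lintegral_ofReal_sq_sub_pos_of_map_ne {f : X → ℝ} (hf : Measurable f)
    (h : (M.map Prod.fst).map f ≠ (M.map Prod.snd).map f) :
    0 < ∫⁻ p, ENNReal.ofReal ((f p.1 - f p.2) ^ 2) ∂M := by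
  refine pos_iff_ne_zero.2 fun h0 => h (map_fst_map_eq_map_snd_map_of_ae_eq hf ?_)
  rw [lintegral_eq_zero_iff (by fun_prop)] at h0
  filter_upwards [h0] with p hp
  simpa [sub_eq_zero] using hp

end MeasureTheory.Measure

theorem Finset.sum_add_mul_le_sum_mul {ι : Type*} {s : Finset ι} {a d : ι → ℝ}
    (ha : ∀ i ∈ s, 1 ≤ a i) (hd : ∀ i ∈ s, 0 ≤ d i) {j : ι} (hj : j ∈ s) :
    ∑ i ∈ s, d i + (a j - 1) * d j ≤ ∑ i ∈ s, a i * d i := by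
  have hextra : (a j - 1) * d j ≤ ∑ i ∈ s, (a i - 1) * d i :=
    single_le_sum (f := fun i => (a i - 1) * d i)
      (fun i hi => mul_nonneg (sub_nonneg.2 (ha i hi)) (hd i hi)) hj
  have hsplit : ∑ i ∈ s, a i * d i = ∑ i ∈ s, d i + ∑ i ∈ s, (a i - 1) * d i := by
    rw [← sum_add_distrib]
    exact sum_congr rfl fun i _ => by ring
  linarith

theorem integral_pos_of_lintegral_ofReal_pos {α : Type*} [MeasurableSpace α] {μ : Measure α}
    {f : α → ℝ} (hf : 0 ≤ᵐ[μ] f) (hfi : Integrable f μ) (h : 0 < ∫⁻ x, ENNReal.ofReal (f x) ∂μ) :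
    0 < ∫ x, f x ∂μ := by
  rw [integral_eq_lintegral_of_nonneg_ae hf hfi.aestronglyMeasurable]
  exact ENNReal.toReal_pos h.ne' hfi.lintegral_lt_top.ne

theorem transportCost_le_integral {Z : Type*} [MeasurableSpace Z] {c : Z → Z → ℝ}
    (hc : ∀ x y, 0 ≤ c x y) {P Q : Measure Z} {M : Measure (Z × Z)} [IsProbabilityMeasure M]
    (hP : M.map Prod.fst = P) (hQ : M.map Prod.snd = Q) :
    transportCost c P Q ≤ ∫ p, c p.1 p.2 ∂M :=
  csInf_le ⟨0, by rintro r ⟨M', -, -, -, rfl⟩; exact integral_nonneg fun p => hc p.1 p.2⟩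
    ⟨M, inferInstance, hP, hQ, rfl⟩

section WeightedCost

variable {ι : Type*} [Fintype ι] {M : Measure ((ι → ℝ) × (ι → ℝ))}

theorem sum_sq_sub_add_le_sum_mul_sq_sub {w : ι → ℝ} (hw : ∀ i, 1 ≤ w i) (j : ι)
    (x y : ι → ℝ) :
    ∑ i, (x i - y i) ^ 2 + (w j ^ 2 - 1) * (x j - y j) ^ 2 ≤
      ∑ i, w i ^ 2 * (x i - y i) ^ 2 :=
  Finset.sum_add_mul_le_sum_mul (fun i _ => one_le_pow₀ (hw i)) (fun _ _ => sq_nonneg _)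
    (Finset.mem_univ j)

theorem integral_sum_sq_sub_lt_integral_sum_mul_sq_sub {w : ι → ℝ} (hw : ∀ i, 1 ≤ w i)
    {j : ι} (hj : 1 < w j)
    (hint : Integrable (fun p => ∑ i, w i ^ 2 * (p.1 i - p.2 i) ^ 2) M)
    (hpos : 0 < ∫⁻ p, ENNReal.ofReal ((p.1 j - p.2 j) ^ 2) ∂M) :
    ∫ p, ∑ i, (p.1 i - p.2 i) ^ 2 ∂M < ∫ p, ∑ i, w i ^ 2 * (p.1 i - p.2 i) ^ 2 ∂M := by
  have hle (p : (ι → ℝ) × (ι → ℝ)) := sum_sq_sub_add_le_sum_mul_sq_sub hw j p.1 p.2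
  have hwj : 0 < w j ^ 2 - 1 := by nlinarith
  have hsq_le (p : (ι → ℝ) × (ι → ℝ)) : (p.1 j - p.2 j) ^ 2 ≤ ∑ i, (p.1 i - p.2 i) ^ 2 :=
    Finset.single_le_sum (f := fun i => (p.1 i - p.2 i) ^ 2) (fun i _ => sq_nonneg _)
      (Finset.mem_univ j)
  have hsum_le (p : (ι → ℝ) × (ι → ℝ)) :
      ∑ i, (p.1 i - p.2 i) ^ 2 ≤ ∑ i, w i ^ 2 * (p.1 i - p.2 i) ^ 2 :=
    (le_add_of_nonneg_right (mul_nonneg hwj.le (sq_nonneg _))).trans (hle p)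
  have hint_sum : Integrable (fun p => ∑ i, (p.1 i - p.2 i) ^ 2) M :=
    hint.mono' (by fun_prop) (.of_forall fun p => by
      rw [Real.norm_of_nonneg (by positivity)]; exact hsum_le p)
  have hint_sq : Integrable (fun p => (p.1 j - p.2 j) ^ 2) M :=
    hint_sum.mono' (by fun_prop) (.of_forall fun p => by
      rw [Real.norm_of_nonneg (by positivity)]; exact hsq_le p)
  have hsq_pos : 0 < ∫ p, (p.1 j - p.2 j) ^ 2 ∂M :=
    integral_pos_of_lintegral_ofReal_pos (.of_forall fun _ => sq_nonneg _) hint_sq hpos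
  calc ∫ p, ∑ i, (p.1 i - p.2 i) ^ 2 ∂M
      < ∫ p, ∑ i, (p.1 i - p.2 i) ^ 2 ∂M + (w j ^ 2 - 1) * ∫ p, (p.1 j - p.2 j) ^ 2 ∂M := by
        have := mul_pos hwj hsq_pos; linarith
    _ = ∫ p, (∑ i, (p.1 i - p.2 i) ^ 2 + (w j ^ 2 - 1) * (p.1 j - p.2 j) ^ 2) ∂M := by
        rw [integral_add hint_sum (hint_sq.const_mul _), integral_const_mul]
    _ ≤ ∫ p, ∑ i, w i ^ 2 * (p.1 i - p.2 i) ^ 2 ∂M :=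
        integral_mono (hint_sum.add (hint_sq.const_mul _)) hint hle

end WeightedCost

theorem strict_transport_separation_general {m : ℕ}
    (P Q : Measure (Fin m → ℝ))
    (j : Fin m) (hmarg : P.map (fun x => x j) ≠ Q.map (fun x => x j))
    (w : Fin m → ℝ) (hw : ∀ i, 1 ≤ w i) (hj : 1 < w j)
    (hattain : ∃ M : Measure ((Fin m → ℝ) × (Fin m → ℝ)),
      IsProbabilityMeasure M ∧ M.map Prod.fst = P ∧ M.map Prod.snd = Q ∧
      Integrable (fun p => ∑ i, (w i) ^ 2 * (p.1 i - p.2 i) ^ 2) M ∧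
      ∫ p, (∑ i, (w i) ^ 2 * (p.1 i - p.2 i) ^ 2) ∂M =
        transportCost (fun x y => ∑ i, (w i) ^ 2 * (x i - y i) ^ 2) P Q) :
    (∀ M : Measure ((Fin m → ℝ) × (Fin m → ℝ)), IsProbabilityMeasure M →
      M.map Prod.fst = P → M.map Prod.snd = Q →
      0 < ∫⁻ p, ENNReal.ofReal ((p.1 j - p.2 j) ^ 2) ∂M) ∧
    transportCost (fun x y => ∑ i, (x i - y i) ^ 2) P Q <
      transportCost (fun x y => ∑ i, (w i) ^ 2 * (x i - y i) ^ 2) P Q := by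
  have hpos : ∀ M : Measure ((Fin m → ℝ) × (Fin m → ℝ)), IsProbabilityMeasure M →
      M.map Prod.fst = P → M.map Prod.snd = Q →
      0 < ∫⁻ p, ENNReal.ofReal ((p.1 j - p.2 j) ^ 2) ∂M := by
    rintro M - rfl rfl
    exact Measure.lintegral_ofReal_sq_sub_pos_of_map_ne (measurable_pi_apply j) hmarg
  refine ⟨hpos, ?_⟩
  obtain ⟨M, hM, hP, hQ, hint, hopt⟩ := hattain
  calc transportCost (fun x y => ∑ i, (x i - y i) ^ 2) P Q
      ≤ ∫ p, ∑ i, (p.1 i - p.2 i) ^ 2 ∂M :=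
        transportCost_le_integral (fun _ _ => by positivity) hP hQ
    _ < ∫ p, ∑ i, w i ^ 2 * (p.1 i - p.2 i) ^ 2 ∂M :=
        integral_sum_sq_sub_lt_integral_sum_mul_sq_sub hw hj hint (hpos M hM hP hQ)
    _ = _ := hopt

/-- If the `j`-th marginals of `P` and `Q` differ, every coupling `M` gives the
displacement `(x j - y j)^2` positive mass; hence for weights with all `w i ≥ 1`
and `w j > 1`, when the infimum defining `W_{c_w}(P,Q)` is attained, the weighted
transport cost strictly exceeds the unweighted one. -/
theorem strict_transport_separation {m : ℕ}
    (P Q : Measure (Fin m → ℝ)) [IsProbabilityMeasure P] [IsProbabilityMeasure Q]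
    (j : Fin m) (hmarg : P.map (fun x => x j) ≠ Q.map (fun x => x j))
    (w : Fin m → ℝ) (hw : ∀ i, 1 ≤ w i) (hj : 1 < w j)
    (hattain : ∃ M : Measure ((Fin m → ℝ) × (Fin m → ℝ)),
      IsProbabilityMeasure M ∧ M.map Prod.fst = P ∧ M.map Prod.snd = Q ∧
      Integrable (fun p => ∑ i, (w i) ^ 2 * (p.1 i - p.2 i) ^ 2) M ∧
      ∫ p, (∑ i, (w i) ^ 2 * (p.1 i - p.2 i) ^ 2) ∂M =
        transportCost (fun x y => ∑ i, (w i) ^ 2 * (x i - y i) ^ 2) P Q) :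
    (∀ M : Measure ((Fin m → ℝ) × (Fin m → ℝ)), IsProbabilityMeasure M →
      M.map Prod.fst = P → M.map Prod.snd = Q →
      0 < ∫⁻ p, ENNReal.ofReal ((p.1 j - p.2 j) ^ 2) ∂M) ∧
    transportCost (fun x y => ∑ i, (x i - y i) ^ 2) P Q <
      transportCost (fun x y => ∑ i, (w i) ^ 2 * (x i - y i) ^ 2) P Q :=
  strict_transport_separation_general P Q j hmarg w hw hj hattain
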